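/- Let n = 3, let s be an integer with 0 ≤ s ≤ 2, and let a_1, a_2 > 0 be reals with a_1 ≠ a_2 such that F4(a_1,s) = F4(a_2,s) = F81(a_1,s) = F81(a_2,s) = 0 (with F4, F81 computed for n = 3). Then s = 1 and {a_1^2, a_2^2} = {(3 - √5)/2, (3 + √5)/2}. -/
import Mathlib



/-- `F4(a,s) = a^4 + s - 6a^2 s/(n-1) - 3s(s-1)/(n-1)`. -/
noncomputable def F4 (n : ℕ) (a : ℝ) (s : ℕ) : ℝ :=
  a ^ 4 + s - 6 * a ^ 2 * s / ((n : ℝ) - 1) - 3 * s * ((s : ℝ) - 1) / ((n : ℝ) - 1)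

/-- `F81(a,s) = a^8 + s - 28(a^6+a^2+s-1)s/(n-1) + 70(a^4+(s-1)/2)s/(n-1)`. -/
noncomputable def F81 (n : ℕ) (a : ℝ) (s : ℕ) : ℝ :=
  a ^ 8 + s - 28 * (a ^ 6 + a ^ 2 + (s : ℝ) - 1) * s / ((n : ℝ) - 1)
    + 70 * (a ^ 4 + ((s : ℝ) - 1) / 2) * s / ((n : ℝ) - 1)

/-- For `n = 3`, common zeros of `F4, F81` with distinct `a` force `s = 1` and the
golden-ratio values of `a²`. -/
theorem dim_three_case (s : ℕ) (hs : s ≤ 2)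
    (a₁ a₂ : ℝ) (ha₁ : 0 < a₁) (ha₂ : 0 < a₂) (hne : a₁ ≠ a₂)
    (h4₁ : F4 3 a₁ s = 0) (h4₂ : F4 3 a₂ s = 0)
    (h81₁ : F81 3 a₁ s = 0) (h81₂ : F81 3 a₂ s = 0) :
    s = 1 ∧ ({a₁ ^ 2, a₂ ^ 2} : Set ℝ) =
      {(3 - Real.sqrt 5) / 2, (3 + Real.sqrt 5) / 2} := by
  unfold F4 F81 at *
  interval_cases s
  · -- s = 0 : F4 = a₁^4 = 0, impossible
    exfalso
    push_cast at h4₁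
    nlinarith [pow_pos ha₁ 4]
  · -- s = 1
    push_cast at h4₁ h4₂
    have h1 : a₁ ^ 4 - 3 * a₁ ^ 2 + 1 = 0 := by linear_combination h4₁
    have h2 : a₂ ^ 4 - 3 * a₂ ^ 2 + 1 = 0 := by linear_combination h4₂
    have h5 : Real.sqrt 5 ^ 2 = 5 := Real.sq_sqrt (by norm_num)
    have hxne : a₁ ^ 2 ≠ a₂ ^ 2 := by
      intro h
      exact hne (by nlinarith [sq_nonneg (a₁ - a₂), sq_nonneg (a₁ + a₂)])
    have key : ∀ x : ℝ, x ^ 4 - 3 * x ^ 2 + 1 = 0 →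
        x ^ 2 = (3 - Real.sqrt 5) / 2 ∨ x ^ 2 = (3 + Real.sqrt 5) / 2 := by
      intro x hx
      have : (x ^ 2 - (3 - Real.sqrt 5) / 2) * (x ^ 2 - (3 + Real.sqrt 5) / 2) = 0 := by
        linear_combination hx - (1/4 : ℝ) * h5
      rcases mul_eq_zero.1 this with h | h
      · left; linarith
      · right; linarith
    refine ⟨rfl, ?_⟩
    rcases key a₁ h1 with k1 | k1 <;> rcases key a₂ h2 with k2 | k2
    · exact absurd (k1.trans k2.symm) hxne
    · rw [k1, k2]
    · rw [k1, k2, Set.pair_comm]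
    · exact absurd (k1.trans k2.symm) hxne
  · -- s = 2 : impossible
    exfalso
    push_cast at h4₁ h81₁
    have h1 : a₁ ^ 4 - 6 * a₁ ^ 2 - 1 = 0 := by linear_combination h4₁
    have h2 : a₁ ^ 8 - 28 * a₁ ^ 6 + 70 * a₁ ^ 4 - 28 * a₁ ^ 2 + 9 = 0 := by
      linear_combination h81₁
    have h3 : 416 * a₁ ^ 2 + 52 = 0 := by
      linear_combination (a₁ ^ 4 - 22 * a₁ ^ 2 - 61) * h1 - h2
    nlinarith [sq_nonneg a₁]
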